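/- Let v¹, ṽ¹, v², ṽ² ∈ ℝⁿ be vectors with ‖v¹ - ṽ¹‖₁ ≤ α and ‖v² - ṽ²‖₁ ≤ α, and suppose v¹ and v² differ by at least 100·α/n (in absolute value) on at least n/4 coordinates. Then ṽ¹ and ṽ² differ on at least n/1000 coordinates. -/
import Mathlib


theorem stmt_1 (n : ℕ) (hn : 1 ≤ n) (α : ℝ) (hα : 0 < α)
    (v1 tv1 v2 tv2 : Fin n → ℝ)
    (h1 : ∑ i, |v1 i - tv1 i| ≤ α)
    (h2 : ∑ i, |v2 i - tv2 i| ≤ α)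
    (hdiff : (n : ℝ) / 4 ≤ (Finset.univ.filter
      (fun i => 100 * α / n ≤ |v1 i - v2 i|)).card) :
    (n : ℝ) / 1000 ≤ (Finset.univ.filter (fun i => tv1 i ≠ tv2 i)).card := by
  set S := Finset.univ.filter (fun i => 100 * α / n ≤ |v1 i - v2 i|) with hS
  set D := Finset.univ.filter (fun i : Fin n => tv1 i ≠ tv2 i) with hD
  have hnpos : (0:ℝ) < n := by exact_mod_cast hn
  have hbound : ∀ i ∈ S \ D, 100 * α / n ≤ |v1 i - tv1 i| + |v2 i - tv2 i| := by
    intro i hi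
    simp only [Finset.mem_sdiff, hS, hD, Finset.mem_filter, Finset.mem_univ, true_and,
      not_not] at hi
    obtain ⟨hle, heq⟩ := hi
    calc 100 * α / n ≤ |v1 i - v2 i| := hle
      _ = |(v1 i - tv1 i) - (v2 i - tv2 i)| := by rw [heq]; ring_nf
      _ ≤ |v1 i - tv1 i| + |v2 i - tv2 i| := abs_sub _ _
  have hsum : ((S \ D).card : ℝ) * (100 * α / n) ≤ 2 * α := by
    calc ((S \ D).card : ℝ) * (100 * α / n)
        = ∑ _i ∈ S \ D, 100 * α / n := by rw [Finset.sum_const]; push_cast; ring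
      _ ≤ ∑ i ∈ S \ D, (|v1 i - tv1 i| + |v2 i - tv2 i|) :=
          Finset.sum_le_sum hbound
      _ ≤ ∑ i, (|v1 i - tv1 i| + |v2 i - tv2 i|) := by
          apply Finset.sum_le_sum_of_subset_of_nonneg (Finset.subset_univ _)
          intro i _ _; positivity
      _ = (∑ i, |v1 i - tv1 i|) + ∑ i, |v2 i - tv2 i| := Finset.sum_add_distrib
      _ ≤ 2 * α := by linarith
  have hcard : ((S \ D).card : ℝ) ≤ n / 50 := by
    have h' := mul_le_mul_of_nonneg_right hsum hnpos.le
    rw [mul_assoc, div_mul_cancel₀ _ hnpos.ne'] at h'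
    nlinarith [hα]
  have hsplit : (S.card : ℝ) ≤ ((S \ D).card : ℝ) + D.card := by
    exact_mod_cast Finset.card_le_card_sdiff_add_card
  linarith
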